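/- arXiv:2509.01191 — 4 statements merged into one kernel-verified Lean document; each statement's English description precedes it below -/
import Mathlib

section
/- Let Q be a root closed (in particular cancellative) commutative monoid and let F be a face of Q. Then the localization Q_F of Q at F is root closed. -/
/-!
Root closedness is a statement about divisibility, `b ^ n ∣ a ^ n → b ∣ a`, and divisibility
in a localization is controlled by `Submonoid.LocalizationMap.map_dvd_map`:
`f y ∣ f x ↔ ∃ s ∈ S, y ∣ s * x`. Clearing denominators by a unit reduces to elements of
the form `f x`, `f y`; if `y ^ n ∣ s * x ^ n` then `y ^ n ∣ (s * x) ^ n`, so `y ∣ s * x` in `M`,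
hence `f y ∣ f x`.
-/

def IsRootClosed (M : Type*) [Monoid M] : Prop :=
  ∀ ⦃a b : M⦄ ⦃n : ℕ⦄, 0 < n → b ^ n ∣ a ^ n → b ∣ a

namespace Submonoid.LocalizationMap

variable {M N : Type*} [CommMonoid M] {S : Submonoid M} [CommMonoid N]

theorem exists_mem_pow_dvd_mul_pow_of_map_pow_dvd (f : LocalizationMap S N) {x y : M} {n : ℕ}
    (hn : 0 < n) (h : f y ^ n ∣ f x ^ n) : ∃ s ∈ S, y ^ n ∣ (s * x) ^ n := by
  rw [← map_pow, ← map_pow, f.map_dvd_map] at h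
  obtain ⟨s, hs, hdvd⟩ := h
  refine ⟨s, hs, hdvd.trans ?_⟩
  rw [mul_pow]
  exact mul_dvd_mul_right (dvd_pow_self s hn.ne') _

theorem isRootClosed (f : LocalizationMap S N) (hM : IsRootClosed M) : IsRootClosed N := by
  intro a b n hn hab
  obtain ⟨x, y, d, hx, hy⟩ := f.surj₂ a b
  have hd : IsUnit (f d) := f.map_units d
  have hxy : f y ^ n ∣ f x ^ n := by
    rw [← hx, ← hy, mul_pow, mul_pow]
    exact mul_dvd_mul_right hab _
  obtain ⟨s, hs, hpow⟩ := f.exists_mem_pow_dvd_mul_pow_of_map_pow_dvd hn hxy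
  have hfyx : f y ∣ f x := f.map_dvd_map.mpr ⟨s, hs, hM hn hpow⟩
  rwa [← hx, ← hy, hd.dvd_mul_right, hd.mul_right_dvd] at hfyx

end Submonoid.LocalizationMap

theorem rootClosed_of_localization_at_face_general (Q : Type*) [CommMonoid Q]
    (hrc : ∀ (a b : Q) (n : ℕ), 0 < n → (∃ q : Q, a ^ n = b ^ n * q) → ∃ q' : Q, a = b * q')
    (F : Submonoid Q) :
    ∀ (a b : Localization F) (n : ℕ), 0 < n →
      (∃ q : Localization F, a ^ n = b ^ n * q) → ∃ q' : Localization F, a = b * q' :=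
  fun _ _ _ hn hab => (Localization.monoidOf F).isRootClosed (fun _ _ _ => hrc _ _ _) hn hab

/-- Let `Q` be a root closed (in particular cancellative) commutative monoid and `F` a face
of `Q`. Then the localization of `Q` at `F` is root closed: whenever `a ^ n = b ^ n * q`
for some `n > 0` and some `q`, there exists `q'` with `a = b * q'`. -/
theorem rootClosed_of_localization_at_face (Q : Type*) [CommMonoid Q] [IsCancelMul Q]
    (hrc : ∀ (a b : Q) (n : ℕ), 0 < n → (∃ q : Q, a ^ n = b ^ n * q) → ∃ q' : Q, a = b * q')
    (F : Submonoid Q) (hface : ∀ x y : Q, x * y ∈ F → x ∈ F ∧ y ∈ F) :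
    ∀ (a b : Localization F) (n : ℕ), 0 < n →
      (∃ q : Localization F, a ^ n = b ^ n * q) → ∃ q' : Localization F, a = b * q' :=
  rootClosed_of_localization_at_face_general Q hrc F
end

section
/- Let A be a commutative ring, let Q be a commutative monoid, and let F be a face of Q with corresponding prime ideal p = Q∖F. Let I be the ideal of the monoid algebra A[Q] generated by the elements e^q with q ∈ Q∖F. Then the composite ring homomorphism A[F] → A[Q] → A[Q]/I (the inclusion of monoid algebras followed by the quotient map) is bijective, i.e., A[F] ≅ A[Q]/I as rings. -/
/-!
Because `Q ∖ F` is a prime ideal, `q ↦ [q ∈ F] e^q` is multiplicative, so it extends to an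
`A`-algebra retraction `A[Q] → A[F]` of the inclusion which kills every `e^q` with `q ∉ F`,
hence kills `I`; this gives injectivity. Conversely each `x ∈ A[Q]` differs from the image of its
retraction by a combination of monomials `e^q` with `q ∉ F`, i.e. by an element of `I`; this gives
surjectivity.
-/

namespace MonoidAlgebra

variable {A Q : Type*} [CommMonoid Q] {F : Submonoid Q}
  (hF : ∀ x y : Q, x * y ∈ F → x ∈ F ∧ y ∈ F)

section CommSemiring

variable [CommSemiring A]

noncomputable def faceIndicator : Q →* MonoidAlgebra A F where
  toFun q := by classical exact if h : q ∈ F then of A F ⟨q, h⟩ else 0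
  map_one' := by simp [F.one_mem]; rfl
  map_mul' x y := by
    classical
    by_cases hxy : x * y ∈ F
    · obtain ⟨hx, hy⟩ := hF x y hxy
      simp only [dif_pos hxy, dif_pos hx, dif_pos hy, ← map_mul]
      rfl
    · by_cases hx : x ∈ F
      · have hy : y ∉ F := fun hy ↦ hxy (mul_mem hx hy)
        simp [hxy, hy]
      · simp [hxy, hx]

noncomputable def faceRetraction : MonoidAlgebra A Q →ₐ[A] MonoidAlgebra A F :=
  lift A (MonoidAlgebra A F) Q (faceIndicator hF)

theorem faceRetraction_single_of_mem {q : Q} (hq : q ∈ F) (a : A) :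
    faceRetraction hF (single q a) = single ⟨q, hq⟩ a := by
  simp [faceRetraction, lift_single, faceIndicator, hq]

theorem faceRetraction_single_of_notMem {q : Q} (hq : q ∉ F) (a : A) :
    faceRetraction hF (single q a) = 0 := by
  simp [faceRetraction, lift_single, faceIndicator, hq]

theorem faceRetraction_mapDomain (x : MonoidAlgebra A F) :
    faceRetraction hF (mapDomainRingHom A F.subtype x) = x := by
  induction x using induction_linear with
  | zero => simp
  | add x y hx hy => simp only [map_add, hx, hy]
  | single f a => simpa using faceRetraction_single_of_mem hF f.2 a

theorem span_of_compl_le_ker_faceRetraction :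
    Ideal.span (of A Q '' {q | q ∉ F}) ≤ RingHom.ker (faceRetraction hF) := by
  rw [Ideal.span_le]
  rintro _ ⟨q, hq, rfl⟩
  exact faceRetraction_single_of_notMem hF hq 1

end CommSemiring

theorem sub_mapDomain_faceRetraction_mem_span [CommRing A] (x : MonoidAlgebra A Q) :
    x - mapDomainRingHom A F.subtype (faceRetraction hF x) ∈
      Ideal.span (of A Q '' {q | q ∉ F}) := by
  induction x using induction_linear with
  | zero => simp
  | add x y hx hy => simpa only [map_add, add_sub_add_comm] using add_mem hx hy
  | single q a =>
    by_cases hq : q ∈ F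
    · simp [faceRetraction_single_of_mem hF hq]
    · have hsingle : single q a = single 1 a * of A Q q := by simp [of_apply, single_mul_single]
      rw [faceRetraction_single_of_notMem hF hq, map_zero, sub_zero, hsingle]
      exact Ideal.mul_mem_left _ _ (Ideal.subset_span ⟨q, hq, rfl⟩)

end MonoidAlgebra

open MonoidAlgebra in
/-- Let `A` be a commutative ring, `Q` a commutative monoid, `F` a face of `Q`, and `I` the ideal
of the monoid algebra `A[Q]` generated by the elements `e^q` with `q ∉ F`. Then the composite
ring homomorphism `A[F] → A[Q] → A[Q]/I` is bijective, i.e. `A[F] ≅ A[Q]/I`. -/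
theorem monoidAlgebra_quotient_face_bijective (A : Type*) [CommRing A]
    (Q : Type*) [CommMonoid Q]
    (F : Submonoid Q) (hface : ∀ x y : Q, x * y ∈ F → x ∈ F ∧ y ∈ F)
    (I : Ideal (MonoidAlgebra A Q))
    (hI : I = Ideal.span ((fun q => MonoidAlgebra.of A Q q) '' {q : Q | q ∉ F})) :
    Function.Bijective
      ((Ideal.Quotient.mk I).comp (MonoidAlgebra.mapDomainRingHom A F.subtype)) := by
  subst hI
  refine ⟨(injective_iff_map_eq_zero _).2 fun x hx ↦ ?_, fun y ↦ ?_⟩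
  · rw [RingHom.comp_apply, Ideal.Quotient.eq_zero_iff_mem] at hx
    have hker := span_of_compl_le_ker_faceRetraction hface hx
    rwa [RingHom.mem_ker, faceRetraction_mapDomain] at hker
  · obtain ⟨x, rfl⟩ := Ideal.Quotient.mk_surjective y
    exact ⟨faceRetraction hface x,
      (Ideal.Quotient.eq.2 (sub_mapDomain_faceRetraction_mem_span hface x)).symm⟩
end

section
/- Let A be an integral domain and let Q be a cancellative, torsion-free commutative monoid. Let F be a face of Q. Then the ideal I of the monoid algebra A[Q] generated by the elements e^q with q ∈ Q∖F is a prime ideal of A[Q]. -/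
/-!
The ideal is the kernel of the `A`-algebra map `A[Q] → A[F]` sending `e^q` to `e^q` for `q ∈ F`
and to `0` otherwise; this is multiplicative precisely because `Q ∖ F` is a prime ideal of `Q`.
The target is a domain: `F` is cancellative and torsion-free, so it embeds into the Grothendieck
group of `Q`, a torsion-free abelian group, and thence into a `ℚ`-vector space (its divisible
hull). Such monoids have unique products, which rules out zero divisors in `A[F]`.
-/

open MonoidAlgebra

theorem UniqueProds.of_isCancelMul_of_isMulTorsionFree {M : Type*} [CommMonoid M] [IsCancelMul M]
    [IsMulTorsionFree M] : UniqueProds M := by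
  have : UniqueSums (Additive (Algebra.GrothendieckGroup M)) :=
    .of_injective_addHom (DivisibleHull.coeAddMonoidHom _).toAddHom DivisibleHull.coe_injective
      inferInstance
  exact .of_injective_mulHom Algebra.GrothendieckGroup.of.toMulHom
    Algebra.GrothendieckGroup.of_injective
    (inferInstanceAs (UniqueProds (Multiplicative (Additive (Algebra.GrothendieckGroup M)))))

section Face

variable {M : Type*} [CommMonoid M] (R : Type*) (F : Submonoid M)
  (hF : ∀ x y : M, x * y ∈ F → x ∈ F ∧ y ∈ F)
include hF

noncomputable def Submonoid.faceRestrict [Semiring R] : M →* R[F] := by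
  classical
  exact
  { toFun := fun q => if h : q ∈ F then of R F ⟨q, h⟩ else 0
    map_one' := by rw [dif_pos F.one_mem]; exact map_one (of R F)
    map_mul' := fun x y => by
      by_cases hx : x ∈ F
      · by_cases hy : y ∈ F
        · rw [dif_pos (F.mul_mem hx hy), dif_pos hx, dif_pos hy, ← map_mul]
          rfl
        · rw [dif_neg (fun h => hy (hF x y h).2), dif_neg hy, mul_zero]
      · rw [dif_neg (fun h => hx (hF x y h).1), dif_neg hx, zero_mul] }

noncomputable def MonoidAlgebra.faceProjection [CommSemiring R] : R[M] →ₐ[R] R[F] :=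
  lift R R[F] M (F.faceRestrict R hF)

variable {R}

theorem MonoidAlgebra.faceProjection_single_of_mem [CommSemiring R] {q : M} (hq : q ∈ F) (r : R) :
    faceProjection R F hF (single q r) = single ⟨q, hq⟩ r := by
  classical
  simp [faceProjection, Submonoid.faceRestrict, hq]

theorem MonoidAlgebra.faceProjection_single_of_not_mem [CommSemiring R] {q : M} (hq : q ∉ F)
    (r : R) : faceProjection R F hF (single q r) = 0 := by
  classical
  simp [faceProjection, Submonoid.faceRestrict, hq]

theorem MonoidAlgebra.sub_faceProjection_mem_span [CommRing R] (f : R[M]) :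
    f - mapDomainRingHom R F.subtype (faceProjection R F hF f) ∈
      Ideal.span ((fun q => of R M q) '' {q | q ∉ F}) := by
  induction f using MonoidAlgebra.induction_linear with
  | zero => simp
  | add f g hf hg => simpa only [map_add, add_sub_add_comm] using add_mem hf hg
  | single q r =>
    by_cases hq : q ∈ F
    · simp [faceProjection_single_of_mem F hF hq]
    · rw [faceProjection_single_of_not_mem F hF hq, map_zero, sub_zero,
        show single q r = single 1 r * of R M q by simp [single_mul_single]]
      exact Ideal.mul_mem_left _ _ (Ideal.subset_span ⟨q, hq, rfl⟩)

variable (R)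

theorem MonoidAlgebra.ker_faceProjection [CommRing R] :
    RingHom.ker (faceProjection R F hF) = Ideal.span ((fun q => of R M q) '' {q | q ∉ F}) := by
  refine le_antisymm (fun f hf => ?_) (Ideal.span_le.mpr ?_)
  · simpa [RingHom.mem_ker.mp hf] using sub_faceProjection_mem_span F hF f
  · rintro _ ⟨q, hq, rfl⟩
    exact faceProjection_single_of_not_mem F hF hq 1

end Face

/-- Let `A` be an integral domain and `Q` a cancellative torsion-free commutative monoid.
For any face `F` of `Q`, the ideal of the monoid algebra `A[Q]` generated by the elements
`e^q` with `q ∉ F` is a prime ideal. -/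
theorem monoidAlgebra_face_ideal_isPrime (A : Type*) [CommRing A] [IsDomain A]
    (Q : Type*) [CommMonoid Q] [IsCancelMul Q]
    (htf : ∀ (n : ℕ), 0 < n → ∀ x y : Q, x ^ n = y ^ n → x = y)
    (F : Submonoid Q) (hface : ∀ x y : Q, x * y ∈ F → x ∈ F ∧ y ∈ F) :
    (Ideal.span ((fun q => MonoidAlgebra.of A Q q) '' {q : Q | q ∉ F})).IsPrime := by
  have : IsMulTorsionFree Q := ⟨fun n hn x y => htf n (Nat.pos_of_ne_zero hn) x y⟩
  have : UniqueProds F := .of_injective_mulHom F.subtype.toMulHom Subtype.val_injective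
    .of_isCancelMul_of_isMulTorsionFree
  rw [← ker_faceProjection A F hface]
  exact RingHom.ker_isPrime _
end

section
/- Let R be a commutative ring, Q a commutative monoid, and α : Q → R a monoid homomorphism into the multiplicative monoid of R. Assume the log ring (R, Q, α) is very solid: for every face G of Q, the ideal of R generated by α(Q∖G) is a prime ideal of R whose α-preimage equals Q∖G. Let 𝔭 be a prime ideal of R and set F = {q ∈ Q : α(q) ∉ 𝔭}. Then for every face G of Q with F ⊆ G, the ideal of the localization R_𝔭 generated by the images of α(Q∖G) is a prime ideal of R_𝔭 whose preimage under the induced map α_𝔭 : Q_F → R_𝔭 equals the set of elements of Q_F not lying in the face of Q_F generated by G; that is, the induced local log ring (R_𝔭, Q_F, α_𝔭) is very solid. -/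
/-- A face of a commutative monoid: a submonoid `F` such that `x * y ∈ F` implies
`x ∈ F` and `y ∈ F`. -/
def Submonoid.IsFace {M : Type*} [CommMonoid M] (F : Submonoid M) : Prop :=
  ∀ x y : M, x * y ∈ F → x ∈ F ∧ y ∈ F

/-- The face generated by a subset `s` of a commutative monoid: the set of elements lying in
every face containing `s`. -/
def faceClosure {M : Type*} [CommMonoid M] (s : Set M) : Set M :=
  {x | ∀ H : Submonoid M, H.IsFace → s ⊆ (H : Set M) → x ∈ H}

/-!
Since `F = α⁻¹(R ∖ 𝔭)` lies in `G`, the prime `𝔮 = (α(Q ∖ G))` of `R` lies in `𝔭`, so it extends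
to a prime of `R_𝔭` contracting back to `𝔮`. On the monoid side, the face of `Q_F` generated by
`G` is `{a - f | a ∈ G, f ∈ F}` (faces contain all units), and `x - f` lies in it exactly when
`x ∈ G`. As `β(x - f)` and `α x` differ by the unit `α f` of `R_𝔭`, both membership conditions
reduce to `α x ∈ 𝔮 ↔ x ∉ G`.
-/

section Ring

variable {R : Type*} [CommRing R] {𝔭 𝔮 : Ideal R} [𝔭.IsPrime]
  (S : Type*) [CommRing S] [Algebra R S] [IsLocalization.AtPrime S 𝔭]

theorem Ideal.disjoint_primeCompl_of_le (h : 𝔮 ≤ 𝔭) : Disjoint (𝔭.primeCompl : Set R) 𝔮 :=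
  Set.disjoint_compl_left_iff_subset.mpr h

theorem IsLocalization.AtPrime.isPrime_map_of_le (h𝔮 : 𝔮.IsPrime) (h : 𝔮 ≤ 𝔭) :
    (𝔮.map (algebraMap R S)).IsPrime :=
  IsLocalization.isPrime_of_isPrime_disjoint 𝔭.primeCompl S 𝔮 h𝔮
    (Ideal.disjoint_primeCompl_of_le h)

theorem IsLocalization.AtPrime.algebraMap_mem_map_iff_of_le (h𝔮 : 𝔮.IsPrime) (h : 𝔮 ≤ 𝔭)
    (r : R) : algebraMap R S r ∈ 𝔮.map (algebraMap R S) ↔ r ∈ 𝔮 := by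
  rw [← Ideal.mem_comap, ← Ideal.under_def,
    IsLocalization.under_map_of_isPrime_disjoint 𝔭.primeCompl S h𝔮
      (Ideal.disjoint_primeCompl_of_le h)]

end Ring

namespace Submonoid

variable {Q : Type*} [CommMonoid Q] {F G : Submonoid Q}

def localize (G F : Submonoid Q) : Submonoid (Localization F) where
  carrier := {z | ∃ a ∈ G, ∃ f : F, Localization.mk a f = z}
  mul_mem' := by
    rintro _ _ ⟨a, ha, f, rfl⟩ ⟨b, hb, g, rfl⟩
    exact ⟨a * b, G.mul_mem ha hb, f * g, (Localization.mk_mul a b f g).symm⟩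
  one_mem' := ⟨1, G.one_mem, 1, Localization.mk_one⟩

theorem mk_mem_localize_iff (hG : G.IsFace) (hFG : F ≤ G) {x : Q} {f : F} :
    Localization.mk x f ∈ G.localize F ↔ x ∈ G := by
  refine ⟨?_, fun hx => ⟨x, hx, f, rfl⟩⟩
  rintro ⟨a, ha, g, heq⟩
  obtain ⟨c, hc : (c * (f * a) : Q) = c * (g * x)⟩ :=
    Localization.r_iff_exists.mp (Localization.mk_eq_mk_iff.mp heq)
  have hmem : (c * (g * x) : Q) ∈ G := by
    rw [← hc]
    exact G.mul_mem (hFG c.2) (G.mul_mem (hFG f.2) ha)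
  exact (hG _ _ (hG _ _ hmem).2).2

theorem IsFace.localize (hG : G.IsFace) (hFG : F ≤ G) : (G.localize F).IsFace := by
  intro u v huv
  induction u using Localization.induction_on with | H u => ?_
  induction v using Localization.induction_on with | H v => ?_
  rw [Localization.mk_mul, mk_mem_localize_iff hG hFG] at huv
  rw [mk_mem_localize_iff hG hFG, mk_mem_localize_iff hG hFG]
  exact hG _ _ huv

theorem localize_le_of_isFace {K : Submonoid (Localization F)} (hK : K.IsFace)
    (hGK : (fun q => Localization.mk q (1 : F)) '' (G : Set Q) ⊆ K) : G.localize F ≤ K := by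
  rintro _ ⟨a, ha, f, rfl⟩
  have hinv : Localization.mk 1 f ∈ K := by
    refine (hK _ (Localization.mk (f : Q) 1) ?_).1
    rw [Localization.mk_mul, one_mul, mul_one, Localization.mk_self]
    exact K.one_mem
  have := K.mul_mem (hGK ⟨a, ha, rfl⟩) hinv
  rwa [Localization.mk_mul, mul_one, one_mul] at this

theorem faceClosure_image_mk_one (hG : G.IsFace) (hFG : F ≤ G) :
    faceClosure ((fun q => Localization.mk q (1 : F)) '' (G : Set Q)) = G.localize F := by
  ext z
  refine ⟨fun hz => hz _ (hG.localize hFG) ?_,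
    fun hz K hK hGK => localize_le_of_isFace hK hGK hz⟩
  rintro _ ⟨a, ha, rfl⟩
  exact ⟨a, ha, 1, rfl⟩

end Submonoid
/-- Let `(R, Q, α)` be a very solid log ring: for every face `G` of `Q`, the ideal of `R`
generated by `α(Q ∖ G)` is prime and its `α`-preimage is `Q ∖ G`. Let `𝔭` be a prime ideal of
`R`, `F = α⁻¹(R ∖ 𝔭)` (a face of `Q`), and `β : Q_F → R_𝔭` the induced homomorphism on
localizations. Then for every face `G` of `Q` containing `F`, the ideal of `R_𝔭` generated by
the images of `α(Q ∖ G)` is prime and its `β`-preimage is the complement of the face of `Q_F`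
generated by (the image of) `G`; i.e. `(R_𝔭, Q_F, β)` is very solid. -/
theorem very_solid_of_localization (R : Type*) [CommRing R] (Q : Type*) [CommMonoid Q]
    (α : Q →* R)
    (hvs : ∀ G : Submonoid Q, G.IsFace →
      (Ideal.span (α '' {q : Q | q ∉ G})).IsPrime ∧
        ∀ q : Q, α q ∈ Ideal.span (α '' {q : Q | q ∉ G}) ↔ q ∉ G)
    (𝔭 : Ideal R) [𝔭.IsPrime]
    (F : Submonoid Q) (hF : ∀ q : Q, q ∈ F ↔ α q ∉ 𝔭)
    (β : Localization F →* Localization.AtPrime 𝔭)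
    (hβ : ∀ (x : Q) (f : F),
      β (Localization.mk x f) * algebraMap R (Localization.AtPrime 𝔭) (α f) =
        algebraMap R (Localization.AtPrime 𝔭) (α x))
    (G : Submonoid Q) (hG : G.IsFace) (hFG : F ≤ G) :
    (Ideal.span (algebraMap R (Localization.AtPrime 𝔭) '' (α '' {q : Q | q ∉ G}))).IsPrime ∧
      ∀ z : Localization F,
        β z ∈ Ideal.span (algebraMap R (Localization.AtPrime 𝔭) '' (α '' {q : Q | q ∉ G})) ↔
          z ∉ faceClosure ((fun q => Localization.mk q (1 : F)) '' (G : Set Q)) := by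
  obtain ⟨h𝔮, hα𝔮⟩ := hvs G hG
  have hle : Ideal.span (α '' {q : Q | q ∉ G}) ≤ 𝔭 := by
    rw [Ideal.span_le]
    rintro _ ⟨q, hq, rfl⟩
    by_contra h
    exact hq (hFG ((hF q).mpr h))
  rw [← Ideal.map_span, Submonoid.faceClosure_image_mk_one hG hFG]
  refine ⟨IsLocalization.AtPrime.isPrime_map_of_le _ h𝔮 hle, fun z => ?_⟩
  induction z using Localization.induction_on with | H p => ?_
  obtain ⟨x, f⟩ := p
  have hf : IsUnit (algebraMap R (Localization.AtPrime 𝔭) (α f)) :=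
    IsLocalization.map_units _ (⟨α f, (hF f).mp f.2⟩ : 𝔭.primeCompl)
  rw [SetLike.mem_coe, Submonoid.mk_mem_localize_iff hG hFG, ← Ideal.mul_unit_mem_iff_mem _ hf,
    hβ, IsLocalization.AtPrime.algebraMap_mem_map_iff_of_le _ h𝔮 hle, hα𝔮]
end
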